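/- arXiv:2403.16624 — 7 statements merged into one kernel-verified Lean document; each statement's English description precedes it below -/
import Mathlib

section
/- Let $1<p<\infty$, $\ell\ge 0$, and let $h:\mathbb{R}\to\mathbb{R}$ be a $C^1$ convex function. Define $\xi_{p,\ell}(t)=(\ell+t^2)^{(p-2)/2}t$. Then for all real $a\ne b$ and all $\alpha,\beta\ge 0$, $$|a-b|^{p-2}(a-b)\big[\alpha\,\xi_{p,\ell}(h'(a))-\beta\,\xi_{p,\ell}(h'(b))\big]\ \ge\ \big(\ell(a-b)^2+(h(a)-h(b))^2\big)^{(p-2)/2}\,(h(a)-h(b))\,(\alpha-\beta).$$ -/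
/-!
Write `d = a - b` and `φ_c(t) = (c + t²)^q t` with `q = (p - 2)/2` and `c = ℓ d²`. Homogeneity gives
`|d|^(p-2) d ξ(t) = φ_c(d t)`, so the right-hand side is `α φ_c(d h'(a)) - β φ_c(d h'(b))` and the
left-hand side is `(α - β) φ_c(h(a) - h(b))`. Convexity of `h` yields
`d h'(b) ≤ h(a) - h(b) ≤ d h'(a)`, and `φ_c` is monotone since `q ≥ -1/2`.
-/

open Real Set

lemma ConvexOn.deriv_mul_sub_le {S : Set ℝ} {f : ℝ → ℝ} (hf : ConvexOn ℝ S f) {x y : ℝ}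
    (hx : x ∈ S) (hy : y ∈ S) (hfx : DifferentiableAt ℝ f x) :
    deriv f x * (y - x) ≤ f y - f x := by
  rcases lt_trichotomy x y with hxy | rfl | hxy
  · have hslope := hf.deriv_le_slope hx hy hxy hfx
    rwa [slope_def_field, le_div_iff₀ (sub_pos.2 hxy)] at hslope
  · simp
  · have hslope := hf.slope_le_deriv hy hx hxy hfx
    rwa [slope_comm, slope_def_field, div_le_iff_of_neg (sub_neg.2 hxy)] at hslope

lemma monotoneOn_rpow_add_sq_mul_nonneg {c q : ℝ} (hc : 0 ≤ c) (hq : -1 / 2 ≤ q) :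
    MonotoneOn (fun t : ℝ => (c + t ^ 2) ^ q * t) (Ici 0) := by
  intro v hv u hu hvu
  simp only
  rcases le_total 0 q with hq0 | hq0
  · exact mul_le_mul (rpow_le_rpow (by positivity) (by gcongr) hq0) hvu hv (by positivity)
  rcases (mem_Ici.1 hv).eq_or_lt with rfl | hv0
  · simp only [mul_zero]
    exact mul_nonneg (by positivity) hu
  -- For `q ≤ 0 ≤ 2q + 1` both factors of `(c / t² + 1)^q * t^(2q+1)` increase on `t > 0`.
  have hsplit : ∀ t : ℝ, 0 < t → (c + t ^ 2) ^ q * t = (c / t ^ 2 + 1) ^ q * t ^ (2 * q + 1) := by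
    intro t ht
    rw [show c + t ^ 2 = (c / t ^ 2 + 1) * t ^ 2 by field_simp,
      mul_rpow (by positivity) (by positivity), rpow_add ht, rpow_one, ← rpow_natCast,
      ← rpow_mul ht.le]
    push_cast
    ring
  have hu0 := hv0.trans_le hvu
  rw [hsplit v hv0, hsplit u hu0]
  refine mul_le_mul (rpow_le_rpow_of_nonpos (by positivity) ?_ hq0)
    (rpow_le_rpow hv0.le hvu (by linarith)) (by positivity) (by positivity)
  gcongr

lemma monotone_rpow_add_sq_mul {c q : ℝ} (hc : 0 ≤ c) (hq : -1 / 2 ≤ q) :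
    Monotone (fun t : ℝ => (c + t ^ 2) ^ q * t) :=
  monotone_of_odd_of_monotoneOn_nonneg (fun t => by simp only [neg_sq, mul_neg])
    (monotoneOn_rpow_add_sq_mul_nonneg hc hq)

lemma abs_rpow_mul_mul_rpow_add_sq_mul {c : ℝ} (hc : 0 ≤ c) (r d t : ℝ) :
    |d| ^ r * d * ((c + t ^ 2) ^ (r / 2) * t) = (c * d ^ 2 + (d * t) ^ 2) ^ (r / 2) * (d * t) := by
  rw [show c * d ^ 2 + (d * t) ^ 2 = |d| ^ 2 * (c + t ^ 2) by rw [sq_abs]; ring,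
    mul_rpow (by positivity) (by positivity), ← rpow_natCast |d| 2, ← rpow_mul (abs_nonneg d)]
  push_cast
  ring_nf

theorem stmt0_general (p ℓ : ℝ) (hp : 1 < p) (hℓ : 0 ≤ ℓ)
    (h : ℝ → ℝ) (hconv : ConvexOn ℝ Set.univ h) (hC1 : ContDiff ℝ 1 h)
    (ξ : ℝ → ℝ) (hξ : ∀ t, ξ t = (ℓ + t ^ 2) ^ ((p - 2) / 2) * t)
    (a b α β : ℝ) (hα : 0 ≤ α) (hβ : 0 ≤ β) :
    (ℓ * (a - b) ^ 2 + (h a - h b) ^ 2) ^ ((p - 2) / 2) * (h a - h b) * (α - β) ≤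
      |a - b| ^ (p - 2) * (a - b) * (α * ξ (deriv h a) - β * ξ (deriv h b)) := by
  have hd : Differentiable ℝ h := hC1.differentiable one_ne_zero
  set φ : ℝ → ℝ := fun t => (ℓ * (a - b) ^ 2 + t ^ 2) ^ ((p - 2) / 2) * t
  have hφ : Monotone φ := monotone_rpow_add_sq_mul (by positivity) (by linarith)
  have hξφ : ∀ t, |a - b| ^ (p - 2) * (a - b) * ξ t = φ ((a - b) * t) := fun t => by
    rw [hξ]
    exact abs_rpow_mul_mul_rpow_add_sq_mul hℓ _ _ _
  have hb : (a - b) * deriv h b ≤ h a - h b := by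
    linarith [hconv.deriv_mul_sub_le (mem_univ b) (mem_univ a) (hd b)]
  have ha : h a - h b ≤ (a - b) * deriv h a := by
    linarith [hconv.deriv_mul_sub_le (mem_univ a) (mem_univ b) (hd a)]
  calc _ = α * φ (h a - h b) - β * φ (h a - h b) := by ring
    _ ≤ α * φ ((a - b) * deriv h a) - β * φ ((a - b) * deriv h b) :=
      sub_le_sub (mul_le_mul_of_nonneg_left (hφ ha) hα) (mul_le_mul_of_nonneg_left (hφ hb) hβ)
    _ = _ := by rw [← hξφ, ← hξφ]; ring

theorem stmt0 (p ℓ : ℝ) (hp : 1 < p) (hℓ : 0 ≤ ℓ)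
    (h : ℝ → ℝ) (hconv : ConvexOn ℝ Set.univ h) (hC1 : ContDiff ℝ 1 h)
    (ξ : ℝ → ℝ) (hξ : ∀ t, ξ t = (ℓ + t ^ 2) ^ ((p - 2) / 2) * t)
    (a b α β : ℝ) (hab : a ≠ b) (hα : 0 ≤ α) (hβ : 0 ≤ β) :
    (ℓ * (a - b) ^ 2 + (h a - h b) ^ 2) ^ ((p - 2) / 2) * (h a - h b) * (α - β) ≤
      |a - b| ^ (p - 2) * (a - b) * (α * ξ (deriv h a) - β * ξ (deriv h b)) :=
  stmt0_general p ℓ hp hℓ h hconv hC1 ξ hξ a b α β hα hβ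
end

section
/- Let $1<p<\infty$ and let $h:\mathbb{R}\to\mathbb{R}$ be a $C^1$ function with $h'\ge 0$. Define $H(t)=\int_0^t h'(\sigma)^{1/p}\,d\sigma$. Then for all $a,b\in\mathbb{R}$, $$|a-b|^{p-2}(a-b)\,(h(a)-h(b))\ \ge\ |H(a)-H(b)|^p.$$ -/
/-!
For `b ≤ a` we have `H a - H b = ∫ σ in b..a, h' σ ^ (1/p)`, and Jensen's inequality for the
convex map `x ↦ x ^ p` on `[b, a]` bounds its `p`-th power by
`(a - b) ^ (p - 1) * ∫ σ in b..a, h' σ = (a - b) ^ (p - 1) * (h a - h b)`.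
Both sides of the claim are symmetric in `a` and `b`.
-/

open Real MeasureTheory Set

theorem rpow_intervalIntegral_le_mul_intervalIntegral_rpow {f : ℝ → ℝ} {p a b : ℝ} (hp : 1 ≤ p)
    (hab : a ≤ b) (hf0 : ∀ x ∈ Icc a b, 0 ≤ f x) (hfi : IntervalIntegrable f volume a b)
    (hfpi : IntervalIntegrable (fun x => f x ^ p) volume a b) :
    (∫ x in a..b, f x) ^ p ≤ (b - a) ^ (p - 1) * ∫ x in a..b, f x ^ p := by
  rcases hab.eq_or_lt with rfl | hlt
  · simp [zero_rpow (by linarith : p ≠ 0)]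
  have hL : 0 < b - a := sub_pos.2 hlt
  have hI : 0 ≤ ∫ x in a..b, f x := intervalIntegral.integral_nonneg hab hf0
  have jensen := (convexOn_rpow hp).map_set_average_le (continuousOn_id.rpow_const
      fun _ _ => Or.inr (by linarith)) isClosed_Ici (μ := volume) (t := Ioc a b) (by simp [hlt])
      (by simp) ((ae_restrict_iff' measurableSet_Ioc).2 (.of_forall fun x hx =>
        hf0 x (Ioc_subset_Icc_self hx))) ((intervalIntegrable_iff_integrableOn_Ioc_of_le hab).1 hfi)
      ((intervalIntegrable_iff_integrableOn_Ioc_of_le hab).1 hfpi)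
  simp only [setAverage_eq, measureReal_def, volume_Ioc, ENNReal.toReal_ofReal hL.le, smul_eq_mul,
    ← intervalIntegral.integral_of_le hab, mul_rpow (inv_nonneg.2 hL.le) hI, inv_rpow hL.le]
    at jensen
  calc (∫ x in a..b, f x) ^ p
      = (b - a) ^ p * (((b - a) ^ p)⁻¹ * (∫ x in a..b, f x) ^ p) := by
        field_simp
    _ ≤ (b - a) ^ p * ((b - a)⁻¹ * ∫ x in a..b, f x ^ p) := by gcongr
    _ = (b - a) ^ (p - 1) * ∫ x in a..b, f x ^ p := by
        rw [rpow_sub_one hL.ne']; ring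

theorem intervalIntegral_deriv_rpow_inv_rpow_le {h : ℝ → ℝ} {p a b : ℝ} (hp : 1 ≤ p)
    (hh : ContDiff ℝ 1 h) (hd : ∀ x ∈ Icc a b, 0 ≤ deriv h x) (hab : a ≤ b) :
    (∫ x in a..b, deriv h x ^ (1 / p)) ^ p ≤ (b - a) ^ (p - 1) * (h b - h a) := by
  have hd' : Continuous (deriv h) := hh.continuous_deriv le_rfl
  have hf : Continuous fun x => deriv h x ^ (1 / p) :=
    hd'.rpow_const fun _ => Or.inr (by positivity)
  have hpow : ∀ x ∈ Icc a b, (deriv h x ^ (1 / p)) ^ p = deriv h x := fun x hx => by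
    rw [one_div, rpow_inv_rpow (hd x hx) (by linarith)]
  have hftc : ∫ x in a..b, deriv h x = h b - h a :=
    intervalIntegral.integral_deriv_eq_sub
      (fun x _ => (hh.differentiable one_ne_zero).differentiableAt) (hd'.intervalIntegrable _ _)
  calc (∫ x in a..b, deriv h x ^ (1 / p)) ^ p
      ≤ (b - a) ^ (p - 1) * ∫ x in a..b, (deriv h x ^ (1 / p)) ^ p :=
        rpow_intervalIntegral_le_mul_intervalIntegral_rpow hp hab
          (fun x hx => rpow_nonneg (hd x hx) _) (hf.intervalIntegrable _ _)
          ((hf.rpow_const fun _ => Or.inr (by linarith)).intervalIntegrable _ _)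
    _ = (b - a) ^ (p - 1) * (h b - h a) := by
        rw [intervalIntegral.integral_congr fun x hx => hpow x (by rwa [uIcc_of_le hab] at hx),
          hftc]

theorem stmt1 (p : ℝ) (hp : 1 < p) (h : ℝ → ℝ) (hC1 : ContDiff ℝ 1 h)
    (hd : ∀ t, 0 ≤ deriv h t)
    (H : ℝ → ℝ) (hH : ∀ t, H t = ∫ σ in (0:ℝ)..t, (deriv h σ) ^ (1 / p))
    (a b : ℝ) :
    |H a - H b| ^ p ≤ |a - b| ^ (p - 2) * (a - b) * (h a - h b) := by
  wlog hba : b ≤ a generalizing a b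
  · convert this b a (le_of_not_ge hba) using 1
    · rw [abs_sub_comm]
    · rw [abs_sub_comm]; ring
  rcases hba.eq_or_lt with rfl | hlt
  · simp [zero_rpow (by linarith : p ≠ 0)]
  have hf : Continuous fun σ => deriv h σ ^ (1 / p) :=
    (hC1.continuous_deriv le_rfl).rpow_const fun _ => Or.inr (by positivity)
  have hHab : H a - H b = ∫ σ in b..a, deriv h σ ^ (1 / p) := by
    rw [hH, hH, intervalIntegral.integral_interval_sub_left (hf.intervalIntegrable _ _)
      (hf.intervalIntegrable _ _)]
  have hpow : |a - b| ^ (p - 2) * (a - b) = (a - b) ^ (p - 1) := by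
    rw [abs_of_pos (sub_pos.2 hlt), ← rpow_add_one (sub_pos.2 hlt).ne']
    ring_nf
  rw [hpow, hHab,
    abs_of_nonneg (intervalIntegral.integral_nonneg hba fun x _ => rpow_nonneg (hd x) _)]
  exact intervalIntegral_deriv_rpow_inv_rpow_le hp.le hC1 (fun x _ => hd x) hba
end

section
/- For all real numbers $a,b\ge 0$ and every $\gamma>1$, $$(a^{\gamma}-b^{\gamma})^2\ \le\ \frac{\gamma^2}{2\gamma-1}\,(a-b)\,(a^{2\gamma-1}-b^{2\gamma-1}).$$ -/
/-!
`(a ^ γ - b ^ γ) / γ` and `(a ^ (2γ-1) - b ^ (2γ-1)) / (2γ-1)` are the integrals from `b` to `a`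
of `t ^ (γ-1)` and of its square (as `t ≥ 0` there), so the inequality is the Cauchy–Schwarz
inequality `(∫ f) ^ 2 ≤ (a - b) ∫ f ^ 2`.
-/

open Real intervalIntegral

theorem sq_integral_le_mul_integral_sq_of_le {f : ℝ → ℝ} {a b : ℝ} (hab : a ≤ b)
    (hf : IntervalIntegrable f MeasureTheory.volume a b)
    (hf2 : IntervalIntegrable (fun x => f x ^ 2) MeasureTheory.volume a b) :
    (∫ x in a..b, f x) ^ 2 ≤ (b - a) * ∫ x in a..b, f x ^ 2 := by
  -- `∫ (f - λ) ^ 2 ≥ 0` for every `λ`, so the discriminant of this quadratic in `λ` is `≤ 0`.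
  have hquad : ∀ l : ℝ, 0 ≤ (b - a) * (l * l) + (-2 * ∫ x in a..b, f x) * l
      + ∫ x in a..b, f x ^ 2 := by
    intro l
    have hexp : ∫ x in a..b, (f x - l) ^ 2
        = (b - a) * (l * l) + (-2 * ∫ x in a..b, f x) * l + ∫ x in a..b, f x ^ 2 := by
      simp only [sub_sq]
      rw [integral_add (hf2.sub ((hf.const_mul 2).mul_const l)) intervalIntegrable_const,
        integral_sub hf2 ((hf.const_mul 2).mul_const l), integral_mul_const, integral_const_mul,
        integral_const, smul_eq_mul]
      ring
    rw [← hexp]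
    exact integral_nonneg hab fun x _ => sq_nonneg _
  have := discrim_le_zero hquad
  rw [discrim] at this
  linarith

theorem sq_integral_le_mul_integral_sq {f : ℝ → ℝ} {a b : ℝ}
    (hf : IntervalIntegrable f MeasureTheory.volume a b)
    (hf2 : IntervalIntegrable (fun x => f x ^ 2) MeasureTheory.volume a b) :
    (∫ x in a..b, f x) ^ 2 ≤ (b - a) * ∫ x in a..b, f x ^ 2 := by
  rcases le_total a b with hab | hba
  · exact sq_integral_le_mul_integral_sq_of_le hab hf hf2
  · have := sq_integral_le_mul_integral_sq_of_le hba hf.symm hf2.symm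
    rw [integral_symm a b, integral_symm a b] at this
    linarith

theorem stmt2 (a b γ : ℝ) (ha : 0 ≤ a) (hb : 0 ≤ b) (hγ : 1 < γ) :
    (a ^ γ - b ^ γ) ^ 2 ≤
      γ ^ 2 / (2 * γ - 1) * ((a - b) * (a ^ (2 * γ - 1) - b ^ (2 * γ - 1))) := by
  have hcont : Continuous fun t : ℝ => t ^ (γ - 1) := continuous_rpow_const (by linarith)
  have hcs := sq_integral_le_mul_integral_sq (a := b) (b := a) (hcont.intervalIntegrable _ _)
    ((hcont.pow 2).intervalIntegrable _ _)
  have hint : ∫ t in b..a, t ^ (γ - 1) = (a ^ γ - b ^ γ) / γ := by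
    rw [integral_rpow (Or.inl (by linarith))]
    ring_nf
  have hint_sq :
      ∫ t in b..a, (t ^ (γ - 1)) ^ 2 = (a ^ (2 * γ - 1) - b ^ (2 * γ - 1)) / (2 * γ - 1) := by
    rw [integral_congr (g := fun t => t ^ (2 * γ - 2)), integral_rpow (Or.inl (by linarith))]
    · ring_nf
    · intro t ht
      have ht0 : 0 ≤ t := (le_inf hb ha).trans ht.1
      dsimp only
      rw [← rpow_natCast, ← rpow_mul ht0]
      ring_nf
  rw [hint, hint_sq] at hcs
  have hγ0 : 0 < γ := by linarith
  have h2γ : 0 < 2 * γ - 1 := by linarith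
  calc (a ^ γ - b ^ γ) ^ 2 = γ ^ 2 * ((a ^ γ - b ^ γ) / γ) ^ 2 := by field_simp
    _ ≤ γ ^ 2 * ((a - b) * ((a ^ (2 * γ - 1) - b ^ (2 * γ - 1)) / (2 * γ - 1))) := by gcongr
    _ = _ := by ring
end

section
/- Let $p>1$, $s\in(0,1)$, $m>p-1$, $N>sp$, and suppose $q_0\ge 1$ satisfies $q_0>\big(1-\frac{p-1}{m}\big)\frac{N}{sp}$ and $q_0<\frac{N}{sp}$. Define recursively $q_{n+1}=\frac{N(p-1)q_n}{m(N-sp\,q_n)}$ whenever $q_n<\frac{N}{sp}$. Then the sequence $(q_n)$ is strictly increasing as long as it is defined, and there exists $n_0$ with $q_{n_0}\ge \frac{N}{sp}$. -/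
/-!
With `A = N/(sp)` and `c = (p-1)A/m` the recursion reads `q_{n+1} = c q_n / (A - q_n)`, whose
fixed point is `ℓ = A - c`. For `x₀ ≤ x < A` the ratio `c / (A - x)` is at least
`r = c / (A - x₀)`, and `r > 1` as soon as `x₀ > ℓ`. So while the sequence stays below `A` it
grows at least geometrically, with ratio `r`, from `q₀ > 0`; hence it must reach `A`.
-/

lemma one_lt_div_sub_of_sub_lt {A c x : ℝ} (hlow : A - c < x) (hup : x < A) :
    1 < c / (A - x) := by
  rw [one_lt_div (sub_pos.2 hup)]
  linarith

noncomputable def bootstrapMap (A c x : ℝ) : ℝ := c * x / (A - x)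

namespace bootstrapMap

variable {A c x₀ x : ℝ}

lemma div_sub_mul_le (hlow : A - c < x₀) (hx₀ : 0 < x₀) (hx : x₀ ≤ x) (hxA : x < A) :
    c / (A - x₀) * x ≤ bootstrapMap A c x := by
  rw [bootstrapMap, mul_comm c, mul_div_assoc, mul_comm x]
  gcongr
  · linarith
  · linarith

lemma lt_self (hlow : A - c < x₀) (hx₀ : 0 < x₀) (hx : x₀ ≤ x) (hxA : x < A) :
    x < bootstrapMap A c x :=
  calc x = 1 * x := (one_mul x).symm
    _ < c / (A - x₀) * x := by
      gcongr
      · linarith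
      · exact one_lt_div_sub_of_sub_lt hlow (hx.trans_lt hxA)
    _ ≤ bootstrapMap A c x := div_sub_mul_le hlow hx₀ hx hxA

end bootstrapMap

section Iteration

variable {A c : ℝ} {q : ℕ → ℝ} (hpos : 0 < q 0) (hlow : A - c < q 0)
  (hrec : ∀ n, q n < A → q (n + 1) = bootstrapMap A c (q n))
include hpos hlow hrec

lemma bootstrap_le_and_lt_succ {n : ℕ} (h : ∀ k ≤ n, q k < A) :
    q 0 ≤ q n ∧ q n < q (n + 1) := by
  induction n with
  | zero =>
    have hA := h 0 le_rfl
    exact ⟨le_rfl, hrec 0 hA ▸ bootstrapMap.lt_self hlow hpos le_rfl hA⟩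
  | succ n ih =>
    obtain ⟨hle, hlt⟩ := ih fun k hk => h k (hk.trans n.le_succ)
    have hle' : q 0 ≤ q (n + 1) := hle.trans hlt.le
    have hA := h (n + 1) le_rfl
    exact ⟨hle', hrec _ hA ▸ bootstrapMap.lt_self hlow hpos hle' hA⟩

lemma bootstrap_exists_le : ∃ n, A ≤ q n := by
  by_contra! hall
  set r := c / (A - q 0)
  have hr : 1 < r := one_lt_div_sub_of_sub_lt hlow (hall 0)
  have hgrow : ∀ n, q 0 * r ^ n ≤ q n := by
    intro n
    induction n with
    | zero => simp
    | succ n ih =>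
      have hq0n := (bootstrap_le_and_lt_succ hpos hlow hrec (n := n) fun k _ => hall k).1
      calc q 0 * r ^ (n + 1) = r * (q 0 * r ^ n) := by ring
        _ ≤ r * q n := by gcongr
        _ ≤ q (n + 1) :=
          hrec n (hall n) ▸ bootstrapMap.div_sub_mul_le hlow hpos hq0n (hall n)
  obtain ⟨n, hn⟩ := pow_unbounded_of_one_lt (A / q 0) hr
  rw [div_lt_iff₀ hpos] at hn
  linarith [hgrow n, hall n]

end Iteration

lemma div_mul_sub_eq_bootstrapMap {p s m N : ℝ} (hsp : s * p ≠ 0) (x : ℝ) :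
    N * (p - 1) * x / (m * (N - s * p * x)) =
      bootstrapMap (N / (s * p)) ((p - 1) / m * (N / (s * p))) x := by
  have hsplit : N - s * p * x = s * p * (N / (s * p) - x) := by
    rw [mul_sub, mul_div_cancel₀ N hsp]
  rw [hsplit, bootstrapMap]
  field_simp

theorem stmt9_general (p s m N : ℝ) (q : ℕ → ℝ) (hp : 1 < p) (hs : 0 < s) (hq0 : 1 ≤ q 0)
    (hq0' : (1 - (p - 1) / m) * (N / (s * p)) < q 0)
    (hrec : ∀ n, q n < N / (s * p) →
      q (n + 1) = N * (p - 1) * q n / (m * (N - s * p * q n))) :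
    (∀ n, (∀ k ≤ n, q k < N / (s * p)) → q n < q (n + 1)) ∧
      ∃ n₀, N / (s * p) ≤ q n₀ := by
  have hsp : s * p ≠ 0 := (mul_pos hs (by linarith)).ne'
  have hpos : 0 < q 0 := by linarith
  have hlow : N / (s * p) - (p - 1) / m * (N / (s * p)) < q 0 := by linarith
  have hrec' : ∀ n, q n < N / (s * p) →
      q (n + 1) = bootstrapMap (N / (s * p)) ((p - 1) / m * (N / (s * p))) (q n) :=
    fun n hn => (hrec n hn).trans (div_mul_sub_eq_bootstrapMap hsp (q n))
  exact ⟨fun n h => (bootstrap_le_and_lt_succ hpos hlow hrec' h).2,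
    bootstrap_exists_le hpos hlow hrec'⟩

theorem stmt9 (p s m N : ℝ) (q : ℕ → ℝ) (hp : 1 < p) (hs : 0 < s) (hs1 : s < 1)
    (hm : p - 1 < m) (hN : s * p < N) (hq0 : 1 ≤ q 0)
    (hq0' : (1 - (p - 1) / m) * (N / (s * p)) < q 0) (hq0'' : q 0 < N / (s * p))
    (hrec : ∀ n, q n < N / (s * p) →
      q (n + 1) = N * (p - 1) * q n / (m * (N - s * p * q n))) :
    (∀ n, (∀ k ≤ n, q k < N / (s * p)) → q n < q (n + 1)) ∧
      ∃ n₀, N / (s * p) ≤ q n₀ :=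
  stmt9_general p s m N q hp hs hq0 hq0' hrec
end

section
/- Let $p>1$ and let $f:[0,\infty)\to(0,\infty)$ be nondecreasing with $f(0)>0$ such that $g:=f^{1/(p-1)}$ is convex and $\lim_{t\to\infty}f(t)/t^{p-1}=\infty$. Set $h(u)=\int_0^u g(t)^{-1}dt$ and suppose $h(\infty)=\infty$. Fix $\varepsilon\in(0,1)$ and define $v=v(u)$ by $h(v)=(1-\varepsilon)^{1/(p-1)}h(u)$. Then there is a constant $C>0$ such that for all $u\ge 0$, $$\Big(1-(1-\varepsilon)^{1/(p-1)}\Big)\, f(v(u))^{1/(p-1)}\ \le\ \frac{u}{h(u)}\ \le\ C(1+u).$$ -/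
/-! Since `1 / g` is positive and nonincreasing, the integral of `1 / g` over an interval `[a, b]`
lies between `(b - a) / g b` and `(b - a) / g a`. Applied on `[v, u]` this bounds
`(1 - α) h(u) = h(u) - h(v)` by `u / g(v)`, where `α = (1 - ε) ^ (1 / (p - 1))`; applied on
`[0, min u 1]` it bounds `h(u)` below by `min u 1 / g 1`, whence `u / h(u) ≤ g 1 * (1 + u)`. -/

open Real Set intervalIntegral MeasureTheory

section Antitone

variable {φ : ℝ → ℝ} {a b : ℝ}

theorem AntitoneOn.intervalIntegral_le_mul (hab : a ≤ b) (hφ : AntitoneOn φ (Icc a b)) :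
    ∫ x in a..b, φ x ≤ (b - a) * φ a := by
  have hint : IntervalIntegrable φ volume a b := (hφ.mono (uIcc_of_le hab).subset).intervalIntegrable
  simpa using integral_mono_on hab hint intervalIntegrable_const
    fun x hx => hφ (left_mem_Icc.2 hab) hx hx.1

theorem AntitoneOn.mul_le_intervalIntegral (hab : a ≤ b) (hφ : AntitoneOn φ (Icc a b)) :
    (b - a) * φ b ≤ ∫ x in a..b, φ x := by
  have hint : IntervalIntegrable φ volume a b := (hφ.mono (uIcc_of_le hab).subset).intervalIntegrable
  simpa using integral_mono_on hab intervalIntegrable_const hint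
    fun x hx => hφ hx (right_mem_Icc.2 hab) hx.2

end Antitone

section ReciprocalIntegral

variable {g : ℝ → ℝ} (hg_pos : ∀ t ≥ 0, 0 < g t) (hg_mono : MonotoneOn g (Ici 0))
include hg_pos hg_mono

theorem antitoneOn_one_div_of_monotoneOn : AntitoneOn (fun t => 1 / g t) (Ici 0) :=
  fun _ hx _ hy hxy => one_div_le_one_div_of_le (hg_pos _ hx) (hg_mono hx hy hxy)

theorem intervalIntegrable_one_div {a b : ℝ} (ha : 0 ≤ a) (hab : a ≤ b) :
    IntervalIntegrable (fun t => 1 / g t) volume a b :=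
  ((antitoneOn_one_div_of_monotoneOn hg_pos hg_mono).mono
    (by rw [uIcc_of_le hab]; exact Icc_subset_Ici_iff hab |>.2 ha)).intervalIntegrable

theorem intervalIntegral_one_div_sub_le {u v : ℝ} (hv : 0 ≤ v) (hvu : v ≤ u) :
    (∫ t in (0 : ℝ)..u, 1 / g t) - ∫ t in (0 : ℝ)..v, 1 / g t ≤ (u - v) * (1 / g v) := by
  rw [integral_interval_sub_left (intervalIntegrable_one_div hg_pos hg_mono le_rfl (hv.trans hvu))
    (intervalIntegrable_one_div hg_pos hg_mono le_rfl hv)]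
  exact (antitoneOn_one_div_of_monotoneOn hg_pos hg_mono).mono (Icc_subset_Ici_iff hvu |>.2 hv)
    |>.intervalIntegral_le_mul hvu

theorem min_one_div_le_intervalIntegral_one_div {u : ℝ} (hu : 0 ≤ u) :
    min u 1 * (1 / g 1) ≤ ∫ t in (0 : ℝ)..u, 1 / g t := by
  set m := min u 1
  have hm : 0 ≤ m := le_min hu zero_le_one
  calc m * (1 / g 1)
      ≤ (m - 0) * (1 / g m) := by
        rw [sub_zero]
        exact mul_le_mul_of_nonneg_left (one_div_le_one_div_of_le (hg_pos m hm)
          (hg_mono hm (mem_Ici.2 zero_le_one) (min_le_right u 1))) hm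
    _ ≤ ∫ t in (0 : ℝ)..m, 1 / g t :=
        (antitoneOn_one_div_of_monotoneOn hg_pos hg_mono).mono Icc_subset_Ici_self
          |>.mul_le_intervalIntegral hm
    _ ≤ ∫ t in (0 : ℝ)..u, 1 / g t :=
        integral_mono_interval le_rfl hm (min_le_left u 1)
          (ae_restrict_of_forall_mem measurableSet_Ioc
            fun t ht => (one_div_pos.2 (hg_pos t ht.1.le)).le)
          (intervalIntegrable_one_div hg_pos hg_mono le_rfl hu)

theorem intervalIntegral_one_div_pos {u : ℝ} (hu : 0 < u) : 0 < ∫ t in (0 : ℝ)..u, 1 / g t :=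
  (mul_pos (lt_min hu one_pos) (one_div_pos.2 (hg_pos 1 zero_le_one))).trans_le
    (min_one_div_le_intervalIntegral_one_div hg_pos hg_mono hu.le)

theorem mul_le_div_intervalIntegral_one_div {α u v : ℝ} (hu : 0 < u) (hv : 0 ≤ v) (hvu : v ≤ u)
    (hα : ∫ t in (0 : ℝ)..v, 1 / g t = α * ∫ t in (0 : ℝ)..u, 1 / g t) :
    (1 - α) * g v ≤ u / ∫ t in (0 : ℝ)..u, 1 / g t := by
  have hgv := hg_pos v hv
  have hsub := intervalIntegral_one_div_sub_le hg_pos hg_mono hv hvu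
  rw [hα, ← one_sub_mul, ← div_eq_mul_one_div, le_div_iff₀ hgv] at hsub
  rw [le_div_iff₀ (intervalIntegral_one_div_pos hg_pos hg_mono hu)]
  nlinarith

theorem div_intervalIntegral_one_div_le {u : ℝ} (hu : 0 < u) :
    u / ∫ t in (0 : ℝ)..u, 1 / g t ≤ g 1 * (1 + u) := by
  have hg1 := hg_pos 1 zero_le_one
  have hmin := min_one_div_le_intervalIntegral_one_div hg_pos hg_mono hu.le
  have hu_le : u ≤ (1 + u) * min u 1 := by
    rcases le_total u 1 with h | h
    · rw [min_eq_left h]; nlinarith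
    · rw [min_eq_right h]; linarith
  rw [div_le_iff₀ (intervalIntegral_one_div_pos hg_pos hg_mono hu)]
  calc u ≤ (1 + u) * min u 1 := hu_le
    _ = g 1 * (1 + u) * (min u 1 * (1 / g 1)) := by field_simp
    _ ≤ g 1 * (1 + u) * ∫ t in (0 : ℝ)..u, 1 / g t := by gcongr

end ReciprocalIntegral

theorem stmt11_general (p ε : ℝ) (hp : 1 < p)
    (f g h v : ℝ → ℝ)
    (hf_pos : ∀ t ≥ (0:ℝ), 0 < f t) (hf_mono : MonotoneOn f (Set.Ici 0))
    (hg : ∀ t, g t = f t ^ (1 / (p - 1)))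
    (hh : ∀ u, h u = ∫ t in (0:ℝ)..u, 1 / g t)
    (hv : ∀ u ≥ (0:ℝ), 0 ≤ v u ∧ v u ≤ u ∧ h (v u) = (1 - ε) ^ (1 / (p - 1)) * h u) :
    ∃ C > (0:ℝ), ∀ u > (0:ℝ),
      (1 - (1 - ε) ^ (1 / (p - 1))) * f (v u) ^ (1 / (p - 1)) ≤ u / h u ∧
        u / h u ≤ C * (1 + u) := by
  have hq : 0 ≤ 1 / (p - 1) := (one_div_pos.2 (sub_pos.2 hp)).le
  have hg_pos : ∀ t ≥ (0:ℝ), 0 < g t := fun t ht => hg t ▸ rpow_pos_of_pos (hf_pos t ht) _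
  have hg_mono : MonotoneOn g (Ici 0) := fun x hx y hy hxy => by
    rw [hg, hg]; exact rpow_le_rpow (hf_pos x hx).le (hf_mono hx hy hxy) hq
  refine ⟨g 1, hg_pos 1 zero_le_one, fun u hu => ?_⟩
  obtain ⟨hv0, hvu, hvh⟩ := hv u hu.le
  rw [hh, hh] at hvh
  rw [← hg, hh]
  exact ⟨mul_le_div_intervalIntegral_one_div hg_pos hg_mono hu hv0 hvu hvh,
    div_intervalIntegral_one_div_le hg_pos hg_mono hu⟩

theorem stmt11 (p ε : ℝ) (hp : 1 < p) (hε : 0 < ε) (hε1 : ε < 1)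
    (f g h v : ℝ → ℝ)
    (hf_pos : ∀ t ≥ (0:ℝ), 0 < f t) (hf_mono : MonotoneOn f (Set.Ici 0)) (hf0 : 0 < f 0)
    (hg : ∀ t, g t = f t ^ (1 / (p - 1))) (hconv : ConvexOn ℝ (Set.Ici 0) g)
    (hsuper : Filter.Tendsto (fun t => f t / t ^ (p - 1)) Filter.atTop Filter.atTop)
    (hh : ∀ u, h u = ∫ t in (0:ℝ)..u, 1 / g t)
    (hinf : Filter.Tendsto h Filter.atTop Filter.atTop)
    (hv : ∀ u ≥ (0:ℝ), 0 ≤ v u ∧ v u ≤ u ∧ h (v u) = (1 - ε) ^ (1 / (p - 1)) * h u) :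
    ∃ C > (0:ℝ), ∀ u > (0:ℝ),
      (1 - (1 - ε) ^ (1 / (p - 1))) * f (v u) ^ (1 / (p - 1)) ≤ u / h u ∧
        u / h u ≤ C * (1 + u) :=
  stmt11_general p ε hp f g h v hf_pos hf_mono hg hh hv
end

section
/- Let $p>1$ and $\tau>\frac{p-2}{p-1}$. Let $f\in C^2((0,\infty))$ be positive, increasing, with $f'>0$, such that $\lim_{t\to\infty}\frac{f(t)f''(t)}{f'(t)^2}=\tau$, and set $\tilde f = f - f(0)$, $\kappa(t)=\int_0^t \tilde f(\sigma)^{2\gamma-2}f'(\sigma)^2\,d\sigma$. Then for every $\gamma$ with $\frac{1}{p-1}<\gamma<\frac{1+\sqrt{1-(p-1)(1-\tau)}}{p-1}$, $$\limsup_{t\to\infty}\ \frac{(p-1)\gamma^2\,\kappa(t)}{\tilde f(t)^{2\gamma-1}f'(t)}\ <\ 1.$$ -/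
/-!
Write `h = f - f 0` and `D = h ^ (2γ - 1) f'`. Then `D' = h ^ (2γ - 2) ((2γ - 1) f' ^ 2 + h f'')`,
and since `h f'' / f' ^ 2 → τ`, eventually `D' ≥ c h ^ (2γ - 2) f' ^ 2 = c κ'` for any
`c < 2γ - 1 + τ`. Integrating gives `c κ ≤ D + O(1)`, so once `D → ∞` the limsup is at most
`(p - 1) γ ^ 2 / c`; the range of `γ` is exactly the condition `(p - 1) γ ^ 2 < 2γ - 1 + τ`.
That `D → ∞` follows from `h ^ (2γ - 2) f' ^ 2 ≥ (2 / γ) (h ^ γ)' - 1` (AM-GM) and from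
`h ≥ t ^ (p - 1)`, which makes `h ^ γ` superlinear because `(p - 1) γ > 1`.
-/

open Real Filter Set Topology

theorem sub_one_mul_sq_lt_of_lt_sqrt {p τ γ : ℝ} (hp : 1 < p) (hγ1 : 1 / (p - 1) < γ)
    (hγ2 : γ < (1 + √(1 - (p - 1) * (1 - τ))) / (p - 1)) :
    (p - 1) * γ ^ 2 < 2 * γ - 1 + τ := by
  have hp1 : 0 < p - 1 := by linarith
  have hx : 0 < (p - 1) * γ - 1 := by rw [div_lt_iff₀ hp1] at hγ1; linarith
  have hsq : ((p - 1) * γ - 1) ^ 2 < 1 - (p - 1) * (1 - τ) :=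
    (lt_sqrt hx.le).1 (by rw [lt_div_iff₀ hp1] at hγ2; linarith)
  nlinarith

theorem eventually_mul_le_rpow {h : ℝ → ℝ} {r γ : ℝ} (C : ℝ) (hγ : 0 ≤ γ) (hrγ : 1 < r * γ)
    (hh : Tendsto (fun t => h t / t ^ r) atTop atTop) : ∀ᶠ t in atTop, C * t ≤ h t ^ γ := by
  filter_upwards [hh.eventually_ge_atTop 1, eventually_gt_atTop 0,
    (tendsto_rpow_atTop (sub_pos.2 hrγ)).eventually_ge_atTop C] with t hht ht hC
  have hle : t ^ r ≤ h t := by rwa [le_div_iff₀ (rpow_pos_of_pos ht r), one_mul] at hht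
  calc C * t ≤ t ^ (r * γ - 1) * t := by gcongr
    _ = (t ^ r) ^ γ := by rw [← rpow_mul ht.le, rpow_sub_one ht.ne', div_mul_cancel₀ _ ht.ne']
    _ ≤ h t ^ γ := rpow_le_rpow (rpow_nonneg ht.le r) hle hγ

theorem Filter.Tendsto.sub_const_mul_div {α : Type*} {l : Filter α} {f u v : α → ℝ} {a τ : ℝ}
    (hf : Tendsto f l atTop) (hlim : Tendsto (fun t => f t * u t / v t) l (𝓝 τ)) :
    Tendsto (fun t => (f t - a) * u t / v t) l (𝓝 τ) := by
  have hfac : Tendsto (fun t => 1 - a * (f t)⁻¹) l (𝓝 1) := by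
    simpa using (hf.inv_tendsto_atTop.const_mul a).const_sub 1
  refine (mul_one τ ▸ hlim.mul hfac).congr' ?_
  filter_upwards [hf.eventually_ne_atTop 0] with t ht
  field_simp

theorem limsup_mul_div_le {α : Type*} {l : Filter α} [l.NeBot] {κ D : α → ℝ} {a b c : ℝ}
    (ha : 0 ≤ a) (hc : 0 < c) (hκ : ∀ᶠ x in l, 0 ≤ κ x) (hD : Tendsto D l atTop)
    (hcomp : ∀ᶠ x in l, c * κ x ≤ D x + b) :
    limsup (fun x => a * κ x / D x) l ≤ a / c := by
  have hbound : Tendsto (fun x => a / c + a * b / c / D x) l (𝓝 (a / c)) := by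
    simpa using tendsto_const_nhds.add (tendsto_const_nhds.div_atTop hD)
  rw [← hbound.limsup_eq]
  refine limsup_le_limsup ?_ (isCoboundedUnder_le_of_eventually_le l (x := 0) ?_)
    hbound.isBoundedUnder_le
  · filter_upwards [hcomp, hD.eventually_gt_atTop 0] with x hx hDx
    rw [div_le_iff₀ hDx, add_mul, div_mul_cancel₀ _ hDx.ne', div_mul_eq_mul_div, ← add_div,
      le_div_iff₀ hc]
    nlinarith [mul_le_mul_of_nonneg_left hx ha]
  · filter_upwards [hκ, hD.eventually_gt_atTop 0] with x hx hDx
    positivity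

/-- No integrability is assumed on `[a, b]`: without it both integrals on the left are `0`. -/
theorem intervalIntegral.integral_sub_integral_le {g : ℝ → ℝ} {a b c : ℝ} (hab : a ≤ b)
    (hbc : b ≤ c) (hg : IntervalIntegrable g MeasureTheory.volume b c)
    (hnn : ∀ x ∈ Icc b c, 0 ≤ g x) :
    (∫ x in a..c, g x) - ∫ x in a..b, g x ≤ ∫ x in b..c, g x := by
  by_cases hab' : IntervalIntegrable g MeasureTheory.volume a b
  · rw [integral_interval_sub_left (hab'.trans hg) hab']
  · have hac : ¬ IntervalIntegrable g MeasureTheory.volume a c := fun hac =>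
      hab' (hac.mono_set <| by
        rw [uIcc_of_le hab, uIcc_of_le (hab.trans hbc)]; exact Icc_subset_Icc le_rfl hbc)
    rw [integral_undef hac, integral_undef hab', sub_zero]
    exact integral_nonneg hbc hnn

theorem sub_pos_of_monotoneOn_of_deriv_pos {f : ℝ → ℝ} {a t : ℝ} (hmono : MonotoneOn f (Ici a))
    (hcont : ContinuousOn f (Ioi a)) (hderiv : ∀ x > a, 0 < deriv f x) (ht : a < t) :
    0 < f t - f a := by
  have hstrict : StrictMonoOn f (Ioi a) :=
    strictMonoOn_of_deriv_pos (convex_Ioi a) hcont (by rwa [interior_Ioi])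
  have hmid : a < (a + t) / 2 := by linarith
  have := hstrict hmid ht (by linarith)
  have := hmono self_mem_Ici hmid.le hmid.le
  linarith

theorem ContDiffOn.hasDerivAt_deriv_deriv {f : ℝ → ℝ} {s : Set ℝ} (hf : ContDiffOn ℝ 2 f s)
    (hs : IsOpen s) {x : ℝ} (hx : x ∈ s) : HasDerivAt (deriv f) (deriv (deriv f) x) x :=
  (((hf.deriv_of_isOpen (m := 1) hs (by norm_num)).differentiableOn one_ne_zero x
    hx).differentiableAt (hs.mem_nhds hx)).hasDerivAt

section Weight

variable {h h' h'' : ℝ → ℝ} {γ c T t : ℝ}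

theorem hasDerivAt_rpow_mul_deriv {x : ℝ} (hx : 0 < h x) (hh : HasDerivAt h (h' x) x)
    (hh' : HasDerivAt h' (h'' x) x) :
    HasDerivAt (fun s => h s ^ (2 * γ - 1) * h' s)
      (h x ^ (2 * γ - 2) * ((2 * γ - 1) * h' x ^ 2 + h x * h'' x)) x := by
  refine ((hh.rpow_const (p := 2 * γ - 1) (Or.inl hx.ne')).mul hh').congr_deriv ?_
  rw [show 2 * γ - 1 - 1 = 2 * γ - 2 by ring, show 2 * γ - 1 = 2 * γ - 2 + 1 by ring,
    rpow_add_one hx.ne']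
  ring

theorem continuousOn_rpow_mul_sq (hpos : ∀ x ≥ T, 0 < h x) (hh : ∀ x ≥ T, ContinuousAt h x)
    (hh' : ∀ x ≥ T, ContinuousAt h' x) :
    ContinuousOn (fun x => h x ^ (2 * γ - 2) * h' x ^ 2) (Ici T) :=
  continuousOn_of_forall_continuousAt fun x hx =>
    ((hh x hx).rpow_const (Or.inl (hpos x hx).ne')).mul ((hh' x hx).pow 2)

theorem mul_integral_rpow_mul_sq_le (hTt : T ≤ t) (hpos : ∀ x ≥ T, 0 < h x)
    (hh : ∀ x ≥ T, HasDerivAt h (h' x) x) (hh' : ∀ x ≥ T, HasDerivAt h' (h'' x) x)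
    (hratio : ∀ x ≥ T, (c - (2 * γ - 1)) * h' x ^ 2 ≤ h x * h'' x) :
    c * ∫ x in T..t, h x ^ (2 * γ - 2) * h' x ^ 2 ≤
      h t ^ (2 * γ - 1) * h' t - h T ^ (2 * γ - 1) * h' T := by
  have hD : ∀ x ≥ T, HasDerivAt (fun s => h s ^ (2 * γ - 1) * h' s)
      (h x ^ (2 * γ - 2) * ((2 * γ - 1) * h' x ^ 2 + h x * h'' x)) x := fun x hx =>
    hasDerivAt_rpow_mul_deriv (hpos x hx) (hh x hx) (hh' x hx)
  have hg := continuousOn_rpow_mul_sq (γ := γ) hpos (fun x hx => (hh x hx).continuousAt)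
    (fun x hx => (hh' x hx).continuousAt)
  rw [← intervalIntegral.integral_const_mul]
  refine intervalIntegral.integral_le_sub_of_hasDeriv_right_of_le hTt
    (continuousOn_of_forall_continuousAt fun x hx => (hD x hx.1).continuousAt)
    (fun x hx => (hD x hx.1.le).hasDerivWithinAt)
    ((continuousOn_const.mul hg).mono Icc_subset_Ici_self).integrableOn_Icc fun x hx => ?_
  linear_combination
    mul_le_mul_of_nonneg_left (hratio x hx.1.le) (rpow_nonneg (hpos x hx.1.le).le (2 * γ - 2))

theorem sub_le_integral_rpow_mul_sq (hγ : γ ≠ 0) (hTt : T ≤ t) (hpos : ∀ x ≥ T, 0 < h x)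
    (hh : ∀ x ≥ T, HasDerivAt h (h' x) x) (hh' : ∀ x ≥ T, ContinuousAt h' x) :
    2 / γ * (h t ^ γ - h T ^ γ) - (t - T) ≤ ∫ x in T..t, h x ^ (2 * γ - 2) * h' x ^ 2 := by
  have hH : ∀ x ≥ T, HasDerivAt (fun s => 2 / γ * h s ^ γ - s)
      (2 * (h x ^ (γ - 1) * h' x) - 1) x := fun x hx => by
    refine (((hh x hx).rpow_const (p := γ) (Or.inl (hpos x hx).ne')).const_mul (2 / γ)
      |>.sub (hasDerivAt_id x)).congr_deriv ?_
    field_simp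
  have hsq : ∀ x ≥ T, h x ^ (2 * γ - 2) * h' x ^ 2 = (h x ^ (γ - 1) * h' x) ^ 2 := fun x hx => by
    rw [mul_pow, ← rpow_mul_natCast (hpos x hx).le]
    ring_nf
  have hg := continuousOn_rpow_mul_sq (γ := γ) hpos (fun x hx => (hh x hx).continuousAt) hh'
  convert intervalIntegral.sub_le_integral_of_hasDeriv_right_of_le hTt
    (continuousOn_of_forall_continuousAt fun x hx => (hH x hx.1).continuousAt)
    (fun x hx => (hH x hx.1.le).hasDerivWithinAt)
    (hg.mono Icc_subset_Ici_self).integrableOn_Icc fun x hx => ?_ using 1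
  · ring
  · rw [hsq x hx.1.le]
    nlinarith [sq_nonneg (h x ^ (γ - 1) * h' x - 1)]

theorem tendsto_rpow_mul_deriv_atTop (hc : 0 < c) (hγ : 0 < γ) (hpos : ∀ x ≥ T, 0 < h x)
    (hh : ∀ x ≥ T, HasDerivAt h (h' x) x) (hh' : ∀ x ≥ T, HasDerivAt h' (h'' x) x)
    (hratio : ∀ x ≥ T, (c - (2 * γ - 1)) * h' x ^ 2 ≤ h x * h'' x)
    (hgrowth : ∀ᶠ t in atTop, γ * t ≤ h t ^ γ) :
    Tendsto (fun t => h t ^ (2 * γ - 1) * h' t) atTop atTop := by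
  refine tendsto_atTop_mono' atTop ?_ <| tendsto_atTop_add_const_left _
    (h T ^ (2 * γ - 1) * h' T - c * (2 / γ * h T ^ γ - T)) (tendsto_id.const_mul_atTop hc)
  filter_upwards [hgrowth, eventually_ge_atTop T] with t hgt hTt
  have hupper := mul_integral_rpow_mul_sq_le hTt hpos hh hh' hratio
  have hlower :=
    sub_le_integral_rpow_mul_sq hγ.ne' hTt hpos hh fun x hx => (hh' x hx).continuousAt
  have hgrowth' : 2 * t ≤ 2 / γ * h t ^ γ := by
    calc 2 * t = 2 / γ * (γ * t) := by field_simp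
      _ ≤ 2 / γ * h t ^ γ := by gcongr
  rw [id]
  linarith [mul_le_mul_of_nonneg_left hlower hc.le, mul_le_mul_of_nonneg_left hgrowth' hc.le]

theorem limsup_mul_integral_div_le {τ : ℝ} (A : ℝ) (hA : 0 ≤ A) (hc : 0 < c) (hγ : 0 < γ)
    (hcτ : c < 2 * γ - 1 + τ) (hnonneg : ∀ x ≥ 0, 0 ≤ h x) (hpos : ∀ x > 0, 0 < h x)
    (hh : ∀ x > 0, HasDerivAt h (h' x) x) (hh' : ∀ x > 0, HasDerivAt h' (h'' x) x)
    (hh'0 : ∀ x > 0, h' x ≠ 0) (hlim : Tendsto (fun t => h t * h'' t / h' t ^ 2) atTop (𝓝 τ))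
    (hgrowth : ∀ᶠ t in atTop, γ * t ≤ h t ^ γ) :
    limsup (fun t => A * (∫ x in 0..t, h x ^ (2 * γ - 2) * h' x ^ 2) /
      (h t ^ (2 * γ - 1) * h' t)) atTop ≤ A / c := by
  obtain ⟨T, hT⟩ := eventually_atTop.1 <| (eventually_gt_atTop 0).and <|
    hlim.eventually (eventually_gt_nhds (by linarith : c - (2 * γ - 1) < τ))
  have hT0 : 0 < T := (hT T le_rfl).1
  replace hpos : ∀ x ≥ T, 0 < h x := fun x hx => hpos x (hT0.trans_le hx)
  replace hh : ∀ x ≥ T, HasDerivAt h (h' x) x := fun x hx => hh x (hT0.trans_le hx)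
  replace hh' : ∀ x ≥ T, HasDerivAt h' (h'' x) x := fun x hx => hh' x (hT0.trans_le hx)
  have hratio : ∀ x ≥ T, (c - (2 * γ - 1)) * h' x ^ 2 ≤ h x * h'' x := fun x hx =>
    ((lt_div_iff₀ (pow_two_pos_of_ne_zero (hh'0 x (hT x hx).1))).1 (hT x hx).2).le
  have hg_nonneg : ∀ x ≥ 0, 0 ≤ h x ^ (2 * γ - 2) * h' x ^ 2 := fun x hx =>
    mul_nonneg (rpow_nonneg (hnonneg x hx) _) (sq_nonneg _)
  refine limsup_mul_div_le
    (b := c * (∫ x in 0..T, h x ^ (2 * γ - 2) * h' x ^ 2) - h T ^ (2 * γ - 1) * h' T) hA hc ?_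
    (tendsto_rpow_mul_deriv_atTop hc hγ hpos hh hh' hratio hgrowth) ?_
  · filter_upwards [eventually_ge_atTop 0] with t ht
    exact intervalIntegral.integral_nonneg ht fun x hx => hg_nonneg x hx.1
  · filter_upwards [eventually_ge_atTop T] with t ht
    have hint := (continuousOn_rpow_mul_sq (γ := γ) hpos (fun x hx => (hh x hx).continuousAt)
      (fun x hx => (hh' x hx).continuousAt)).mono (uIcc_of_le ht ▸ Icc_subset_Ici_self)
    have hκ := intervalIntegral.integral_sub_integral_le hT0.le ht hint.intervalIntegrable
      fun x hx => hg_nonneg x (hT0.le.trans hx.1)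
    linarith [mul_integral_rpow_mul_sq_le ht hpos hh hh' hratio,
      mul_le_mul_of_nonneg_left hκ hc.le]

end Weight

theorem stmt16_general (p τ : ℝ) (hp : 1 < p)
    (f : ℝ → ℝ) (hfC2 : ContDiffOn ℝ 2 f (Set.Ioi 0))
    (hf' : ∀ t > (0:ℝ), 0 < deriv f t)
    (hf_mono : MonotoneOn f (Set.Ici 0))
    (hsuper : Tendsto (fun t => f t / t ^ (p - 1)) atTop atTop)
    (hlim : Tendsto (fun t => f t * deriv (deriv f) t / (deriv f t) ^ 2) atTop (nhds τ))
    (κ : ℝ → ℝ) (γ : ℝ)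
    (hκ : ∀ t, κ t = ∫ σ in (0:ℝ)..t, (f σ - f 0) ^ (2 * γ - 2) * (deriv f σ) ^ 2)
    (hγ1 : 1 / (p - 1) < γ)
    (hγ2 : γ < (1 + Real.sqrt (1 - (p - 1) * (1 - τ))) / (p - 1)) :
    Filter.limsup (fun t => (p - 1) * γ ^ 2 * κ t / ((f t - f 0) ^ (2 * γ - 1) * deriv f t))
      atTop < 1 := by
  obtain rfl : κ = _ := funext hκ
  have hp1 : 0 < p - 1 := sub_pos.2 hp
  have hγ : 0 < γ := (one_div_pos.2 hp1).trans hγ1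
  obtain ⟨c, hAc, hcτ⟩ := exists_between (sub_one_mul_sq_lt_of_lt_sqrt hp hγ1 hγ2)
  have hc : 0 < c := lt_of_le_of_lt (by positivity) hAc
  have hftop : Tendsto f atTop atTop :=
    (hsuper.atTop_mul_atTop₀ (tendsto_rpow_atTop hp1)).congr' <| by
      filter_upwards [eventually_gt_atTop 0] with t ht
      exact div_mul_cancel₀ _ (rpow_pos_of_pos ht _).ne'
  have hhsuper : Tendsto (fun t => (f t - f 0) / t ^ (p - 1)) atTop atTop :=
    (hsuper.atTop_add ((tendsto_const_nhds (x := -f 0)).div_atTop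
      (tendsto_rpow_atTop hp1))).congr fun t => by ring
  refine (limsup_mul_integral_div_le _ (by positivity) hc hγ hcτ
    (fun x hx => sub_nonneg.2 (hf_mono self_mem_Ici hx hx))
    (fun x => sub_pos_of_monotoneOn_of_deriv_pos hf_mono hfC2.continuousOn hf')
    (fun x hx => ((hfC2.differentiableOn two_ne_zero x hx).differentiableAt
      (isOpen_Ioi.mem_nhds hx)).hasDerivAt.sub_const _)
    (fun x hx => hfC2.hasDerivAt_deriv_deriv isOpen_Ioi hx) (fun x hx => (hf' x hx).ne')
    (hftop.sub_const_mul_div hlim)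
    (eventually_mul_le_rpow γ hγ.le (by rwa [div_lt_iff₀' hp1] at hγ1) hhsuper)).trans_lt ?_
  exact (div_lt_one hc).2 hAc

theorem stmt16 (p τ : ℝ) (hp : 1 < p) (hτ : (p - 2) / (p - 1) < τ)
    (f : ℝ → ℝ) (hfC2 : ContDiffOn ℝ 2 f (Set.Ioi 0))
    (hf_pos : ∀ t > (0:ℝ), 0 < f t) (hf' : ∀ t > (0:ℝ), 0 < deriv f t)
    (hf0 : 0 < f 0) (hf_mono : MonotoneOn f (Set.Ici 0))
    (hsuper : Tendsto (fun t => f t / t ^ (p - 1)) atTop atTop)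
    (hF2 : if 2 ≤ p then ConvexOn ℝ (Set.Ici 0) (fun t => (f t - f 0) ^ ((1:ℝ) / (p - 1)))
      else ConvexOn ℝ (Set.Ici 0) f)
    (hlim : Tendsto (fun t => f t * deriv (deriv f) t / (deriv f t) ^ 2) atTop (nhds τ))
    (κ : ℝ → ℝ) (γ : ℝ)
    (hκ : ∀ t, κ t = ∫ σ in (0:ℝ)..t, (f σ - f 0) ^ (2 * γ - 2) * (deriv f σ) ^ 2)
    (hγ1 : 1 / (p - 1) < γ)
    (hγ2 : γ < (1 + Real.sqrt (1 - (p - 1) * (1 - τ))) / (p - 1)) :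
    Filter.limsup (fun t => (p - 1) * γ ^ 2 * κ t / ((f t - f 0) ^ (2 * γ - 1) * deriv f t))
      atTop < 1 :=
  stmt16_general p τ hp f hfC2 hf' hf_mono hsuper hlim κ γ hκ hγ1 hγ2
end

section
/- Let $f\in C^2((0,\infty))$ be positive with $f'(t)>0$ for $t>0$, and suppose $\tau:=\lim_{t\to\infty}\frac{f(t)f''(t)}{f'(t)^2}$ exists with $\tau<1$. Then for every $\varepsilon\in(0,1-\tau)$ there exists $c=c(\varepsilon)>0$ such that $f(t)\le c\,(1+t)^{\frac{1}{1-(\tau+\varepsilon)}}$ for all $t\ge 0$. -/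
/-!
Put `β = 1 - (τ + ε)` and `u = f / f'`. Then `u' = 1 - f f'' / f'^2 ≥ β` from some `T` on, so `u`
grows at least linearly: `u t ≥ u T + β (t - T)`. Since `(log f)' = 1 / u`, the function `f` grows
at most like `g t = (u T + β (t - T)) ^ (1 / β)`, whose logarithmic derivative is exactly
`1 / (u T + β (t - T))`; precisely, `f / g` is antitone on `[T, ∞)`. On `[0, T]` the monotone `f`
is bounded by `max (f 0) (f T)`.
-/

open Real Filter Set

theorem antitoneOn_div_of_deriv_mul_le {f g f' g' : ℝ → ℝ} {D : Set ℝ} (hD : Convex ℝ D)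
    (hf : ∀ x ∈ D, HasDerivAt f (f' x) x) (hg : ∀ x ∈ D, HasDerivAt g (g' x) x)
    (hg0 : ∀ x ∈ D, g x ≠ 0) (hfg : ∀ x ∈ D, f' x * g x ≤ f x * g' x) :
    AntitoneOn (fun x => f x / g x) D := by
  have hdiv (x) (hx : x ∈ D) :
      HasDerivAt (fun x => f x / g x) ((f' x * g x - f x * g' x) / g x ^ 2) x :=
    (hf x hx).div (hg x hx) (hg0 x hx)
  refine antitoneOn_of_hasDerivWithinAt_nonpos hD
    (fun x hx => (hdiv x hx).continuousAt.continuousWithinAt)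
    (fun x hx => (hdiv x (interior_subset hx)).hasDerivWithinAt) fun x hx => ?_
  exact div_nonpos_of_nonpos_of_nonneg (sub_nonpos.2 (hfg x (interior_subset hx))) (sq_nonneg _)

theorem add_mul_sub_le_div_of_mul_div_sq_le {f f' f'' : ℝ → ℝ} {T β t : ℝ}
    (hf : ∀ x ∈ Ici T, HasDerivAt f (f' x) x) (hf' : ∀ x ∈ Ici T, HasDerivAt f' (f'' x) x)
    (hf'0 : ∀ x ∈ Ici T, f' x ≠ 0) (hratio : ∀ x ∈ Ici T, f x * f'' x / f' x ^ 2 ≤ 1 - β)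
    (ht : T ≤ t) :
    f T / f' T + β * (t - T) ≤ f t / f' t := by
  have hu (x) (hx : x ∈ Ici T) :
      HasDerivAt (fun x => f x / f' x) (1 - f x * f'' x / f' x ^ 2) x :=
    ((hf x hx).div (hf' x hx) (hf'0 x hx)).congr_deriv (by
      rw [sub_div, ← sq, div_self (pow_ne_zero 2 (hf'0 x hx))])
  have hgrowth := (convex_Ici T).mul_sub_le_image_sub_of_le_deriv (C := β)
    (fun x hx => (hu x hx).continuousAt.continuousWithinAt)
    (fun x hx => (hu x (interior_subset hx)).differentiableAt.differentiableWithinAt)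
    (fun x hx => by
      rw [(hu x (interior_subset hx)).deriv]; linarith [hratio x (interior_subset hx)])
    T self_mem_Ici t ht ht
  linarith

theorem le_mul_rpow_of_add_mul_sub_le_div {f f' : ℝ → ℝ} {T a β t : ℝ} (ha : 0 < a)
    (hβ : 0 < β) (hf : ∀ x ∈ Ici T, HasDerivAt f (f' x) x) (hf'0 : ∀ x ∈ Ici T, 0 < f' x)
    (hlin : ∀ x ∈ Ici T, a + β * (x - T) ≤ f x / f' x) (ht : T ≤ t) :
    f t ≤ f T / a ^ (1 / β) * (a + β * (t - T)) ^ (1 / β) := by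
  have hv (x) (hx : x ∈ Ici T) : 0 < a + β * (x - T) := by
    have : 0 ≤ β * (x - T) := mul_nonneg hβ.le (sub_nonneg.2 hx)
    linarith
  have hvpow (x) (hx : x ∈ Ici T) : HasDerivAt (fun x => (a + β * (x - T)) ^ (1 / β))
      ((a + β * (x - T)) ^ (1 / β - 1)) x :=
    (((((hasDerivAt_id x).sub_const T).const_mul β).const_add a).rpow_const
      (Or.inl (hv x hx).ne')).congr_deriv (by
        rw [mul_one, mul_one_div_cancel hβ.ne', one_mul]; rfl)
  have hanti := antitoneOn_div_of_deriv_mul_le (convex_Ici T) hf hvpow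
    (fun x hx => (rpow_pos_of_pos (hv x hx) _).ne') fun x hx => by
      have hvx := hv x hx
      have hmul : (a + β * (x - T)) * f' x ≤ f x := (le_div_iff₀ (hf'0 x hx)).1 (hlin x hx)
      rw [rpow_sub_one hvx.ne']
      calc f' x * (a + β * (x - T)) ^ (1 / β)
          = (a + β * (x - T)) * f' x * ((a + β * (x - T)) ^ (1 / β) / (a + β * (x - T))) := by
            field_simp
        _ ≤ f x * ((a + β * (x - T)) ^ (1 / β) / (a + β * (x - T))) :=
            mul_le_mul_of_nonneg_right hmul (by positivity)
  have hquot := hanti self_mem_Ici ht ht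
  rw [div_le_iff₀ (rpow_pos_of_pos (hv t ht) _)] at hquot
  simpa only [sub_self, mul_zero, add_zero, div_mul_eq_mul_div] using hquot

theorem exists_le_mul_one_add_rpow_of_mul_div_sq_le {f f' f'' : ℝ → ℝ} {T β : ℝ} (hT : 0 ≤ T)
    (hβ : 0 < β) (hf : ∀ x ∈ Ici T, HasDerivAt f (f' x) x)
    (hf' : ∀ x ∈ Ici T, HasDerivAt f' (f'' x) x) (hfpos : ∀ x ∈ Ici T, 0 < f x)
    (hf'pos : ∀ x ∈ Ici T, 0 < f' x) (hratio : ∀ x ∈ Ici T, f x * f'' x / f' x ^ 2 ≤ 1 - β) :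
    ∃ C > 0, ∀ t ≥ T, f t ≤ C * (1 + t) ^ (1 / β) := by
  set a := f T / f' T
  have hfT := hfpos T self_mem_Ici
  have ha : 0 < a := div_pos hfT (hf'pos T self_mem_Ici)
  refine ⟨f T / a ^ (1 / β) * (a + β) ^ (1 / β), by positivity, fun t ht => ?_⟩
  have hlin (x) (hx : x ∈ Ici T) : a + β * (x - T) ≤ f x / f' x :=
    add_mul_sub_le_div_of_mul_div_sq_le hf hf' (fun x hx => (hf'pos x hx).ne') hratio hx
  have htT : 0 ≤ β * (t - T) := mul_nonneg hβ.le (sub_nonneg.2 ht)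
  calc f t ≤ f T / a ^ (1 / β) * (a + β * (t - T)) ^ (1 / β) :=
        le_mul_rpow_of_add_mul_sub_le_div ha hβ hf hf'pos hlin ht
    _ ≤ f T / a ^ (1 / β) * ((a + β) * (1 + t)) ^ (1 / β) := by
        gcongr
        nlinarith
    _ = f T / a ^ (1 / β) * (a + β) ^ (1 / β) * (1 + t) ^ (1 / β) := by
        rw [mul_rpow (by positivity) (by linarith), mul_assoc]

theorem exists_le_mul_one_add_rpow_of_monotoneOn {f : ℝ → ℝ} {T α C : ℝ} (hα : 0 ≤ α)
    (hT : 0 < T) (hC : 0 < C) (hmono : MonotoneOn f (Ioi 0))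
    (hbound : ∀ t ≥ T, f t ≤ C * (1 + t) ^ α) :
    ∃ c > 0, ∀ t ≥ 0, f t ≤ c * (1 + t) ^ α := by
  refine ⟨max C (max (f 0) (f T)), lt_max_of_lt_left hC, fun t ht => ?_⟩
  rcases le_or_gt T t with hTt | htT
  · exact (hbound t hTt).trans (by gcongr; exact le_max_left _ _)
  · have hft : f t ≤ max (f 0) (f T) := by
      rcases ht.eq_or_lt with rfl | ht0
      · exact le_max_left _ _
      · exact (hmono ht0 hT htT.le).trans (le_max_right _ _)
    calc f t ≤ max C (max (f 0) (f T)) := hft.trans (le_max_right _ _)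
      _ ≤ max C (max (f 0) (f T)) * (1 + t) ^ α :=
        le_mul_of_one_le_right (lt_max_of_lt_left hC).le (one_le_rpow (by linarith) hα)

theorem ContDiffOn.hasDerivAt_and_hasDerivAt_deriv {f : ℝ → ℝ} {s : Set ℝ}
    (hf : ContDiffOn ℝ 2 f s) (hs : IsOpen s) {x : ℝ} (hx : x ∈ s) :
    HasDerivAt f (deriv f x) x ∧ HasDerivAt (deriv f) (deriv (deriv f) x) x :=
  ⟨((hf.differentiableOn (by norm_num)).differentiableAt (hs.mem_nhds hx)).hasDerivAt,
    (((hf.deriv_of_isOpen hs (m := 1) (by norm_num)).differentiableOn one_ne_zero).differentiableAt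
      (hs.mem_nhds hx)).hasDerivAt⟩

theorem stmt17_general (τ ε : ℝ) (f : ℝ → ℝ) (hfC2 : ContDiffOn ℝ 2 f (Set.Ioi 0))
    (hf_pos : ∀ t > (0:ℝ), 0 < f t) (hf' : ∀ t > (0:ℝ), 0 < deriv f t)
    (hlim : Tendsto (fun t => f t * deriv (deriv f) t / (deriv f t) ^ 2) atTop (nhds τ))
    (hε : 0 < ε) (hε' : ε < 1 - τ) :
    ∃ c > (0:ℝ), ∀ t ≥ (0:ℝ), f t ≤ c * (1 + t) ^ (1 / (1 - (τ + ε))) := by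
  have hβ : 0 < 1 - (τ + ε) := by linarith
  obtain ⟨T₀, hT₀⟩ :=
    eventually_atTop.mp (hlim.eventually (eventually_lt_nhds (lt_add_of_pos_right τ hε)))
  have hT : 0 < max T₀ 1 := lt_max_of_lt_right one_pos
  have hIci : Ici (max T₀ 1) ⊆ Ioi 0 := fun x hx => hT.trans_le hx
  have hderiv (x) (hx : x ∈ Ici (max T₀ 1)) :=
    hfC2.hasDerivAt_and_hasDerivAt_deriv isOpen_Ioi (hIci hx)
  obtain ⟨C, hC, hbound⟩ := exists_le_mul_one_add_rpow_of_mul_div_sq_le hT.le hβ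
    (fun x hx => (hderiv x hx).1) (fun x hx => (hderiv x hx).2)
    (fun x hx => hf_pos x (hIci hx)) (fun x hx => hf' x (hIci hx))
    (fun x hx => by linarith [hT₀ x (le_of_max_le_left hx)])
  have hmono : MonotoneOn f (Ioi 0) :=
    (strictMonoOn_of_deriv_pos (convex_Ioi 0) hfC2.continuousOn (by rwa [interior_Ioi])).monotoneOn
  exact exists_le_mul_one_add_rpow_of_monotoneOn (one_div_pos.2 hβ).le hT hC hmono hbound

theorem stmt17 (τ ε : ℝ) (f : ℝ → ℝ) (hfC2 : ContDiffOn ℝ 2 f (Set.Ioi 0))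
    (hf_pos : ∀ t > (0:ℝ), 0 < f t) (hf' : ∀ t > (0:ℝ), 0 < deriv f t)
    (hlim : Tendsto (fun t => f t * deriv (deriv f) t / (deriv f t) ^ 2) atTop (nhds τ))
    (hτ : τ < 1) (hε : 0 < ε) (hε' : ε < 1 - τ) :
    ∃ c > (0:ℝ), ∀ t ≥ (0:ℝ), f t ≤ c * (1 + t) ^ (1 / (1 - (τ + ε))) :=
  stmt17_general τ ε f hfC2 hf_pos hf' hlim hε hε'
end
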